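/- arXiv:2510.27375 — 5 statements merged into one kernel-verified Lean document; each statement's English description precedes it below -/
import Mathlib

section
/- Let R be a commutative local ring, let d ≥ 2 be an integer, and let b_0, …, b_{d−1} and c_0, …, c_{d−1} be elements of R. Let M be the cyclic bidiagonal matrix with diagonal (b_0, …, b_{d−1}) and wrapped subdiagonal (c_0, …, c_{d−1}). If det(M) is invertible in R, then either every b_i is invertible in R or every c_i is invertible in R. -/
open Finset

lemma cyclic_bidiagonal_det {R : Type*} [CommRing R] (n : ℕ) (b c : Fin (n+2) → R) :
    (Matrix.of fun i j : Fin (n+2) =>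
      if i = j then b i
      else if (i : ℕ) = (j : ℕ) + 1 ∨ ((i : ℕ) = 0 ∧ (j : ℕ) = n + 1) then c i
      else 0).det = ∏ i, b i + (-1)^(n+1) * ∏ i, c i := by
  set M : Matrix (Fin (n+2)) (Fin (n+2)) R := Matrix.of fun i j : Fin (n+2) =>
      if i = j then b i
      else if (i : ℕ) = (j : ℕ) + 1 ∨ ((i : ℕ) = 0 ∧ (j : ℕ) = n + 1) then c i
      else 0 with hM
  rw [Matrix.det_succ_row_zero]
  have hne : (0 : Fin (n+2)) ≠ Fin.last (n+1) := by
    simp [Fin.ext_iff]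
  have hzero : ∀ j ∈ (univ : Finset (Fin (n+2))), j ∉ ({0, Fin.last (n+1)} : Finset (Fin (n+2))) →
      (-1 : R) ^ (j : ℕ) * M 0 j * (M.submatrix Fin.succ j.succAbove).det = 0 := by
    intro j _ hj
    simp only [mem_insert, mem_singleton, not_or] at hj
    have h1 : ((0 : Fin (n+2)) : ℕ) ≠ (j : ℕ) + 1 := by simp
    have h2 : (j : ℕ) ≠ n + 1 := by
      intro hc
      exact hj.2 (Fin.ext (by simpa using hc))
    have h3 : (0 : Fin (n+2)) ≠ j := fun hc => hj.1 hc.symm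
    have : M 0 j = 0 := by
      simp only [hM, Matrix.of_apply, if_neg h3]
      rw [if_neg]
      push_neg
      exact ⟨h1, fun _ => h2⟩
    rw [this, mul_zero, zero_mul]
  rw [← Finset.sum_subset (Finset.subset_univ {0, Fin.last (n+1)}) hzero,
    Finset.sum_pair hne]
  have hd0 : (M.submatrix Fin.succ (0 : Fin (n+2)).succAbove).det = ∏ i : Fin (n+1), b i.succ := by
    rw [Matrix.det_of_lowerTriangular]
    · refine Finset.prod_congr rfl fun i _ => ?_
      simp [hM, Fin.succAbove_zero]
    · intro i j hij
      have hij' : (i : ℕ) < (j : ℕ) := hij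
      have h1 : i.succ ≠ Fin.succ j := by simp [Fin.ext_iff]; omega
      simp only [hM, Matrix.submatrix_apply, Matrix.of_apply, Fin.succAbove_zero, if_neg h1]
      rw [if_neg]
      push_neg
      refine ⟨by simp; omega, fun hc => absurd hc (by simp)⟩
  have hdl : (M.submatrix Fin.succ (Fin.last (n+1)).succAbove).det
      = ∏ i : Fin (n+1), c i.succ := by
    rw [Matrix.det_of_upperTriangular]
    · refine Finset.prod_congr rfl fun i _ => ?_
      have hne2 : i.succ ≠ i.castSucc := by simp [Fin.ext_iff]
      simp only [hM, Matrix.submatrix_apply, Matrix.of_apply, Fin.succAbove_last]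
      rw [if_neg hne2, if_pos (Or.inl (by simp))]
    · intro i j hij
      have hij' : (j : ℕ) < (i : ℕ) := hij
      have h1 : i.succ ≠ j.castSucc := by simp [Fin.ext_iff]; omega
      simp only [hM, Matrix.submatrix_apply, Matrix.of_apply, Fin.succAbove_last, if_neg h1]
      rw [if_neg]
      push_neg
      refine ⟨by simp; omega, fun hc => absurd hc (by simp)⟩
  have hM00 : M 0 0 = b 0 := by simp [hM]
  have hM0l : M 0 (Fin.last (n+1)) = c 0 := by
    have : (0 : Fin (n+2)) ≠ Fin.last (n+1) := hne
    simp [hM, if_neg this]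
  rw [hd0, hdl, hM00, hM0l]
  simp only [Fin.val_zero, pow_zero, Fin.val_last]
  rw [Fin.prod_univ_succ b, Fin.prod_univ_succ c]
  ring

/-- Let `R` be a commutative local ring and `M` the cyclic bidiagonal `d × d` matrix with
diagonal `(b 0, …, b (d-1))` and wrapped subdiagonal `(c 0, …, c (d-1))`. If `det M` is
invertible in `R`, then either every `b i` is invertible or every `c i` is invertible. -/
theorem cyclic_bidiagonal_isUnit_of_isUnit_det {R : Type*} [CommRing R] [IsLocalRing R]
    {d : ℕ} (hd : 2 ≤ d) (b c : Fin d → R)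
    (h : IsUnit (Matrix.of fun i j : Fin d =>
      if i = j then b i
      else if (i : ℕ) = (j : ℕ) + 1 ∨ ((i : ℕ) = 0 ∧ (j : ℕ) = d - 1) then c i
      else 0).det) :
    (∀ i, IsUnit (b i)) ∨ (∀ i, IsUnit (c i)) := by
  obtain ⟨n, rfl⟩ : ∃ n, d = n + 2 := ⟨d - 2, by omega⟩
  have hsub : n + 2 - 1 = n + 1 := rfl
  rw [show (Matrix.of fun i j : Fin (n+2) =>
      if i = j then b i
      else if (i : ℕ) = (j : ℕ) + 1 ∨ ((i : ℕ) = 0 ∧ (j : ℕ) = n + 2 - 1) then c i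
      else 0) = (Matrix.of fun i j : Fin (n+2) =>
      if i = j then b i
      else if (i : ℕ) = (j : ℕ) + 1 ∨ ((i : ℕ) = 0 ∧ (j : ℕ) = n + 1) then c i
      else 0) from rfl, cyclic_bidiagonal_det] at h
  rcases IsLocalRing.isUnit_or_isUnit_of_isUnit_add h with hb | hc
  · left
    intro i
    exact isUnit_of_dvd_unit (Finset.dvd_prod_of_mem b (Finset.mem_univ i)) hb
  · right
    intro i
    have : IsUnit (∏ i, c i) := (IsUnit.mul_iff.mp hc).2
    exact isUnit_of_dvd_unit (Finset.dvd_prod_of_mem c (Finset.mem_univ i)) this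
end

section
/- Let K be a finite field with q elements and odd characteristic, let ν be the 2-adic valuation of q−1, let δ ≥ 1 be an integer with ν ≥ δ+1, and set d = 2^δ. Let K_s be a separable closure of K and let b be an element of multiplicative order 2^{δ+ν} in K_s^*. Then a = b^d lies in K^* and has multiplicative order exactly 2^ν, the field extension K(b)/K has degree d, and (1, b, b², …, b^{d−1}) is a K-basis of K(b). -/
/-!
Since `2 ^ ν ∣ q - 1`, the element `b ^ d` of order `2 ^ ν` is fixed by `x ↦ x ^ q`, hence lies
in `K`; so `b` is a root of `X ^ d - C a` and `[K(b) : K] ≤ d`. Conversely, if `n = [K(b) : K]`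
then `b ∈ K(b)ˣ` gives `2 ^ (δ + ν) ∣ q ^ n - 1`, and since `4 ∣ q - 1`, lifting the exponent gives
`v₂(q ^ n - 1) = ν + v₂(n)`, so `d ∣ n`. The power basis of `K(b)` is then indexed by `Fin d`.
-/

open Polynomial

theorem FiniteField.mem_range_algebraMap_of_pow_card_eq_self (K : Type*) [Field K] [Fintype K]
    {L : Type*} [Field L] [Algebra K L] {x : L} (hx : x ^ Fintype.card K = x) :
    x ∈ (algebraMap K L).range := by
  have hsplits : (X ^ Fintype.card K - X : K[X]).Splits := by
    rw [splits_iff_card_roots, FiniteField.roots_X_pow_card_sub_X,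
      FiniteField.X_pow_card_sub_X_natDegree_eq K Fintype.one_lt_card]
    rfl
  refine hsplits.mem_range_of_isRoot (FiniteField.X_pow_card_sub_X_ne_zero K Fintype.one_lt_card) ?_
  simp [hx]

theorem padicValNat.pow_two_sub_one_of_four_dvd {q n : ℕ} (hq : 1 < q) (hq4 : 4 ∣ q - 1)
    (hn : n ≠ 0) :
    padicValNat 2 (q ^ n - 1) = padicValNat 2 (q - 1) + padicValNat 2 n := by
  have hqn : 1 < q ^ n := Nat.one_lt_pow hn hq
  have h := Int.two_pow_sub_pow' (x := q) (y := 1) n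
    (by rw [← Nat.cast_one, ← Nat.cast_sub hq.le]; exact_mod_cast hq4) (by omega)
  rw [one_pow, ← Nat.cast_pow, ← Nat.cast_one, ← Nat.cast_sub hqn.le, ← Nat.cast_sub hq.le] at h
  rw [← Nat.cast_inj (R := ℕ∞), Nat.cast_add, padicValNat_eq_emultiplicity (by omega),
    padicValNat_eq_emultiplicity (by omega), padicValNat_eq_emultiplicity hn]
  exact_mod_cast h

theorem two_pow_dvd_of_two_pow_add_dvd_pow_sub_one {q n δ : ℕ} (hq : 1 < q) (hq4 : 4 ∣ q - 1)
    (hn : n ≠ 0) (h : 2 ^ (δ + padicValNat 2 (q - 1)) ∣ q ^ n - 1) : 2 ^ δ ∣ n := by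
  rw [padicValNat_dvd_iff_le hn]
  rw [padicValNat_dvd_iff_le (by have := Nat.one_lt_pow hn hq; omega),
    padicValNat.pow_two_sub_one_of_four_dvd hq hq4 hn] at h
  omega

namespace IntermediateField

variable {K L : Type*} [Field K] [Field L] [Algebra K L]

theorem finrank_adjoin_simple_le_of_pow_eq_algebraMap {x : L} {a : K} {d : ℕ} (hd : d ≠ 0)
    (hx : x ^ d = algebraMap K L a) : Module.finrank K K⟮x⟯ ≤ d := by
  have hroot : aeval x (X ^ d - C a) = 0 := by simp [hx]
  have hint : IsIntegral K x := ⟨X ^ d - C a, monic_X_pow_sub_C a hd, hroot⟩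
  rw [adjoin.finrank hint, ← natDegree_X_pow_sub_C (n := d) (r := a)]
  exact natDegree_le_natDegree (minpoly.degree_le_of_ne_zero K x (X_pow_sub_C_ne_zero
    (Nat.pos_of_ne_zero hd) a) hroot)

theorem orderOf_dvd_card_pow_finrank_adjoin_simple_sub_one [Fintype K] {x : L}
    (hx : IsIntegral K x) (hx0 : x ≠ 0) :
    orderOf x ∣ Fintype.card K ^ Module.finrank K K⟮x⟯ - 1 := by
  have := adjoin.finiteDimensional hx
  have : Finite K⟮x⟯ := Module.finite_of_finite K
  have : Fintype K⟮x⟯ := Fintype.ofFinite _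
  have hgen0 : AdjoinSimple.gen K x ≠ 0 := by
    rwa [Ne, ← (algebraMap K⟮x⟯ L).injective.eq_iff, AdjoinSimple.algebraMap_gen, map_zero]
  have hord : orderOf (AdjoinSimple.gen K x) = orderOf x := by
    conv_rhs => rw [← AdjoinSimple.algebraMap_gen K x]
    exact (orderOf_injective (algebraMap K⟮x⟯ L).toMonoidHom (algebraMap K⟮x⟯ L).injective _).symm
  rw [← Module.card_eq_pow_finrank, ← hord]
  exact orderOf_dvd_of_pow_eq_one (FiniteField.pow_card_sub_one_eq_one _ hgen0)

theorem exists_basis_pow_of_finrank_adjoin_simple_eq {x : L} (hx : IsIntegral K x) {d : ℕ}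
    (hd : Module.finrank K K⟮x⟯ = d) :
    ∃ B : Module.Basis (Fin d) K K⟮x⟯, ∀ i : Fin d, (B i : L) = x ^ (i : ℕ) := by
  let pb := adjoin.powerBasis hx
  refine ⟨pb.basis.reindex (finCongr (pb.finrank.symm.trans hd)), fun i => ?_⟩
  simp [pb, adjoin.powerBasis_gen]

end IntermediateField

open IntermediateField in
theorem kummer_basis_of_orderOf_two_pow_general
    {K : Type*} [Field K] [Fintype K]
    (q : ℕ) (hq : q = Fintype.card K)
    (ν : ℕ) (hν : ν = (q - 1).factorization 2)
    (δ : ℕ) (hδ : 1 ≤ δ) (hνδ : δ + 1 ≤ ν)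
    (d : ℕ) (hd : d = 2 ^ δ)
    (b : AlgebraicClosure K) (hb : orderOf b = 2 ^ (δ + ν)) :
    (∃ a : K, algebraMap K (AlgebraicClosure K) a = b ^ d ∧ orderOf a = 2 ^ ν) ∧
      Module.finrank K K⟮b⟯ = d ∧
      ∃ B : Module.Basis (Fin d) K K⟮b⟯, ∀ i : Fin d, (B i : AlgebraicClosure K) = b ^ (i : ℕ) := by
  subst hd
  have hq1 : 1 < q := hq ▸ Fintype.one_lt_card
  rw [Nat.factorization_def _ Nat.prime_two] at hν
  have hq_dvd : 2 ^ ν ∣ q - 1 := hν ▸ pow_padicValNat_dvd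
  have hq4 : 4 ∣ q - 1 := (pow_dvd_pow 2 (by omega : 2 ≤ ν)).trans hq_dvd
  have hb0 : b ≠ 0 := by
    rintro rfl
    exact pow_ne_zero _ two_ne_zero (hb.symm.trans (orderOf_zero _))
  have hbd : orderOf (b ^ 2 ^ δ) = 2 ^ ν := by
    rw [orderOf_pow_of_dvd (by positivity) (by rw [hb, pow_add]; exact dvd_mul_right _ _),
      hb, pow_add, Nat.mul_div_cancel_left _ (by positivity)]
  obtain ⟨a, ha⟩ : b ^ 2 ^ δ ∈ (algebraMap K (AlgebraicClosure K)).range := by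
    refine FiniteField.mem_range_algebraMap_of_pow_card_eq_self K ?_
    rw [← hq, ← Nat.sub_add_cancel hq1.le, pow_succ,
      orderOf_dvd_iff_pow_eq_one.mp (hbd ▸ hq_dvd), one_mul]
  have horda : orderOf a = 2 ^ ν := by
    rw [← hbd, ← ha]
    exact (orderOf_injective (algebraMap K _).toMonoidHom (algebraMap K _).injective a).symm
  have hbint : IsIntegral K b := Algebra.IsIntegral.isIntegral b
  have := adjoin.finiteDimensional hbint
  have hle : Module.finrank K K⟮b⟯ ≤ 2 ^ δ :=
    finrank_adjoin_simple_le_of_pow_eq_algebraMap (by positivity) ha.symm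
  have hdvd : 2 ^ δ ∣ Module.finrank K K⟮b⟯ := by
    refine two_pow_dvd_of_two_pow_add_dvd_pow_sub_one hq1 hq4 Module.finrank_pos.ne' ?_
    rw [← hν, ← hb, hq]
    exact orderOf_dvd_card_pow_finrank_adjoin_simple_sub_one hbint hb0
  have hfinrank := le_antisymm hle (Nat.le_of_dvd Module.finrank_pos hdvd)
  exact ⟨⟨a, ha, horda⟩, hfinrank,
    exists_basis_pow_of_finrank_adjoin_simple_eq hbint hfinrank⟩

open IntermediateField in
/-- Let `K` be a finite field with `q` elements and odd characteristic, let `ν` be the 2-adic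
valuation of `q - 1`, let `δ ≥ 1` with `ν ≥ δ + 1`, and set `d = 2 ^ δ`. If `b` is an element of
multiplicative order `2 ^ (δ + ν)` in the multiplicative group of an algebraic (= separable)
closure `K_s` of `K`, then `a = b ^ d` lies in `K*` and has multiplicative order exactly `2 ^ ν`,
the extension `K(b)/K` has degree `d`, and `(1, b, b², …, b^(d-1))` is a `K`-basis of `K(b)`. -/
theorem kummer_basis_of_orderOf_two_pow
    {K : Type*} [Field K] [Fintype K] (hchar : Odd (ringChar K))
    (q : ℕ) (hq : q = Fintype.card K)
    (ν : ℕ) (hν : ν = (q - 1).factorization 2)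
    (δ : ℕ) (hδ : 1 ≤ δ) (hνδ : δ + 1 ≤ ν)
    (d : ℕ) (hd : d = 2 ^ δ)
    (b : AlgebraicClosure K) (hb : orderOf b = 2 ^ (δ + ν)) :
    (∃ a : K, algebraMap K (AlgebraicClosure K) a = b ^ d ∧ orderOf a = 2 ^ ν) ∧
      Module.finrank K K⟮b⟯ = d ∧
      ∃ B : Module.Basis (Fin d) K K⟮b⟯, ∀ i : Fin d, (B i : AlgebraicClosure K) = b ^ (i : ℕ) :=
  kummer_basis_of_orderOf_two_pow_general q hq ν hν δ hδ hνδ d hd b hb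
end

section
/- Let p be an odd prime, let q be a power of p, let δ ≥ 1 be an integer and d = 2^δ, and assume 4q ≥ d⁴ (so that the interval [q+1−2√q, q+1+2√q] has length at least 2d²). Then there exists a positive integer N with q+1−2√q ≤ N ≤ q+1+2√q such that d² divides N and N is not congruent to 1 modulo p. -/
/-- Let `p` be an odd prime, `q` a power of `p`, `δ ≥ 1`, `d = 2 ^ δ`, and assume `4q ≥ d⁴`
(so that the Hasse interval `[q + 1 - 2√q, q + 1 + 2√q]` has length at least `2d²`). Then there
is a positive integer `N` in the Hasse interval such that `d²` divides `N` and `N` is not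
congruent to `1` modulo `p`. -/
theorem exists_multiple_in_hasse_interval
    (p : ℕ) (hp : p.Prime) (hodd : Odd p)
    (q : ℕ) (hq : ∃ n : ℕ, 1 ≤ n ∧ q = p ^ n)
    (δ : ℕ) (hδ : 1 ≤ δ) (d : ℕ) (hd : d = 2 ^ δ)
    (hqd : d ^ 4 ≤ 4 * q) :
    ∃ N : ℕ, 0 < N ∧
      (q : ℝ) + 1 - 2 * Real.sqrt q ≤ N ∧ (N : ℝ) ≤ q + 1 + 2 * Real.sqrt q ∧
      d ^ 2 ∣ N ∧ ¬ N ≡ 1 [MOD p] := by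
  obtain ⟨n, hn, rfl⟩ := hq
  have hp3 : 3 ≤ p := by
    obtain ⟨k, hk⟩ := hodd
    have := hp.two_le
    omega
  have hq3 : 3 ≤ p ^ n := le_trans hp3 (Nat.le_self_pow (by omega) p)
  set qr : ℝ := ((p ^ n : ℕ) : ℝ) with hqr
  have hq1 : (1 : ℝ) < qr := by
    have h' : (1 : ℕ) < p ^ n := by omega
    rw [hqr]; exact_mod_cast h'
  have hq0 : (0 : ℝ) ≤ qr := by positivity
  set s : ℝ := Real.sqrt qr with hs
  have hs2 : s ^ 2 = qr := Real.sq_sqrt hq0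
  have hs1 : 1 < s := by
    nlinarith [Real.sqrt_nonneg qr, hs2]
  have hd0 : 0 < d := by rw [hd]; positivity
  have hd2 : (0 : ℝ) < (d : ℝ) ^ 2 := by positivity
  -- d^2 ≤ 2 s
  have hds : ((d : ℝ)) ^ 2 ≤ 2 * s := by
    have h1 : ((d : ℝ) ^ 2) ^ 2 ≤ (2 * s) ^ 2 := by
      have : ((d : ℝ)) ^ 4 ≤ 4 * qr := by rw [hqr]; exact_mod_cast hqd
      rw [mul_pow, hs2]
      nlinarith
    exact (pow_le_pow_iff_left₀ (by positivity) (by positivity) (by norm_num)).mp h1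
  set L : ℝ := qr + 1 - 2 * s with hL
  have hL0 : 0 < L := by nlinarith
  set m : ℕ := ⌈L / (d : ℝ) ^ 2⌉₊ with hm
  have hm0 : 0 < m := Nat.ceil_pos.mpr (by positivity)
  have hmge : L ≤ (m : ℝ) * (d : ℝ) ^ 2 := by
    have := Nat.le_ceil (L / (d : ℝ) ^ 2)
    calc L = L / (d : ℝ) ^ 2 * (d : ℝ) ^ 2 := by field_simp
    _ ≤ (m : ℝ) * (d : ℝ) ^ 2 := by
        exact mul_le_mul_of_nonneg_right this (le_of_lt hd2)
  have hmlt : (m : ℝ) * (d : ℝ) ^ 2 < L + (d : ℝ) ^ 2 := by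
    have h1 : (m : ℝ) < L / (d : ℝ) ^ 2 + 1 :=
      Nat.ceil_lt_add_one (by positivity)
    have h2 : (m : ℝ) * (d : ℝ) ^ 2 < (L / (d : ℝ) ^ 2 + 1) * (d : ℝ) ^ 2 :=
      mul_lt_mul_of_pos_right h1 hd2
    calc (m : ℝ) * (d : ℝ) ^ 2 < (L / (d : ℝ) ^ 2 + 1) * (d : ℝ) ^ 2 := h2
    _ = L + (d : ℝ) ^ 2 := by field_simp
  -- candidates m*d^2 and (m+1)*d^2
  have hub : ((m + 1 : ℕ) : ℝ) * (d : ℝ) ^ 2 ≤ qr + 1 + 2 * s := by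
    push_cast
    nlinarith
  have hpd : ¬ (p ∣ d ^ 2) := by
    intro h
    have h2 : p ∣ 2 := by
      have : p ∣ 2 ^ (δ * 2) := by rwa [hd, ← pow_mul] at h
      exact hp.dvd_of_dvd_pow (n := δ * 2) this
    have := Nat.le_of_dvd two_pos h2
    omega
  have key : ∀ a b : ℕ, a ≡ 1 [MOD p] → a + d ^ 2 = b → ¬ b ≡ 1 [MOD p] := by
    intro a b ha hab hb
    apply hpd
    have : a + d ^ 2 ≡ a + 0 [MOD p] := by
      subst hab
      calc a + d ^ 2 ≡ 1 [MOD p] := hb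
      _ ≡ a [MOD p] := ha.symm
      _ = a + 0 := (Nat.add_zero a).symm
    have := (Nat.ModEq.add_left_cancel' a this)
    exact (Nat.modEq_zero_iff_dvd).mp this
  by_cases hc : m * d ^ 2 ≡ 1 [MOD p]
  · refine ⟨(m + 1) * d ^ 2, by positivity, ?_, ?_, ⟨m + 1, by ring⟩, ?_⟩
    · push_cast
      have : L ≤ (m : ℝ) * (d : ℝ) ^ 2 := hmge
      nlinarith
    · exact_mod_cast hub
    · exact key _ _ hc (by ring)
  · refine ⟨m * d ^ 2, by positivity, ?_, ?_, ⟨m, mul_comm _ _⟩, hc⟩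
    · push_cast
      linarith [hmge]
    · have : (m : ℝ) * (d : ℝ) ^ 2 ≤ ((m + 1 : ℕ) : ℝ) * (d : ℝ) ^ 2 := by
        push_cast; nlinarith
      push_cast
      push_cast at hub
      nlinarith
end

section
/- Let K be a field and let E be the elliptic curve over K with Weierstrass equation y² + a₁xy + a₃y = x³ + a₂x² + a₄x + a₆ and origin O. Let A, B, C be pairwise distinct points on E. Then u_{A,B}·u_{A,C} = x_A + Γ(A,B,C)·u_{A,C} + Γ(A,C,B)·u_{A,B} + a₂ + x_A(B) + x_A(C) as an identity of functions on E, where x_A(B) = x(B−A) and x_A(C) = x(C−A). -/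
noncomputable section

open WeierstrassCurve

open scoped Classical

variable {K : Type*} [Field K]

/-- The `x`-coordinate of an affine point (junk value `0` at the point at infinity). -/
def ptX {W : Affine K} : W.Point → K
  | .zero => 0
  | @Affine.Point.some _ _ _ x _ _ => x

/-- The `y`-coordinate of an affine point (junk value `0` at the point at infinity). -/
def ptY {W : Affine K} : W.Point → K
  | .zero => 0
  | @Affine.Point.some _ _ _ _ y _ => y

/-- A model of the function field of the elliptic curve `W` over `K`, together with the
coordinate functions `x`, `y`, the pullbacks of functions along translations and negation,
the order of vanishing of a (nonzero) function at each rational point, and the evaluation of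
a function at a rational point.  All the listed axioms hold for the genuine function field
`K(E)` of `E = W`, where `τ A f = f ∘ (· + A)`, `ι f = f ∘ (-·)`, `ord P f` is the valuation
of `f` at `P`, and `eval P f` is the value `f(P)` (junk if `P` is a pole of `f`). -/
structure FunModel (W : Affine K) where
  /-- the function field -/
  F : Type*
  /-- `F` is a field -/
  fieldF : Field F
  /-- `F` is a `K`-algebra -/
  algebraF : Algebra K F
  /-- the coordinate function `x` -/
  x : F
  /-- the coordinate function `y` -/
  y : F
  /-- `x` and `y` satisfy the Weierstrass equation of `W` -/
  equation : y ^ 2 + algebraMap K F W.a₁ * x * y + algebraMap K F W.a₃ * y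
      = x ^ 3 + algebraMap K F W.a₂ * x ^ 2 + algebraMap K F W.a₄ * x + algebraMap K F W.a₆
  /-- the function field is generated over `K` by `x` and `y` -/
  adjoin_x_y : IntermediateField.adjoin K {x, y} = ⊤
  /-- pullback of a function along the translation map `P ↦ P + A` -/
  τ : W.Point → F ≃ₐ[K] F
  τ_zero : τ 0 = AlgEquiv.refl
  τ_add : ∀ A B : W.Point, τ (A + B) = (τ A).trans (τ B)
  /-- pullback of a function along the negation map `P ↦ -P` -/
  ι : F ≃ₐ[K] F
  ι_x : ι x = x
  ι_y : ι y = -y - algebraMap K F W.a₁ * x - algebraMap K F W.a₃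
  ι_τ : ∀ (A : W.Point) (f : F), ι (τ A f) = τ (-A) (ι f)
  /-- the order of vanishing at a rational point of a nonzero function
  (junk value at the zero function); poles have negative order -/
  ord : W.Point → F → ℤ
  ord_mul : ∀ (P : W.Point) (f g : F), f ≠ 0 → g ≠ 0 → ord P (f * g) = ord P f + ord P g
  ord_min_le_add : ∀ (P : W.Point) (f g : F), f ≠ 0 → g ≠ 0 → f + g ≠ 0 →
    min (ord P f) (ord P g) ≤ ord P (f + g)
  ord_algebraMap : ∀ (P : W.Point) (c : K), c ≠ 0 → ord P (algebraMap K F c) = 0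
  ord_τ : ∀ (A P : W.Point) (f : F), ord P (τ A f) = ord (P + A) f
  ord_ι : ∀ (P : W.Point) (f : F), ord P (ι f) = ord (-P) f
  ord_x_zero : ord 0 x = -2
  ord_y_zero : ord 0 y = -3
  ord_x_nonneg : ∀ P : W.Point, P ≠ 0 → 0 ≤ ord P x
  ord_y_nonneg : ∀ P : W.Point, P ≠ 0 → 0 ≤ ord P y
  ord_x_sub_pos : ∀ P : W.Point, P ≠ 0 → 0 < ord P (x - algebraMap K F (ptX P))
  /-- evaluation of a function at a rational point (junk value at poles) -/
  eval : W.Point → F → K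
  eval_algebraMap : ∀ (P : W.Point) (c : K), eval P (algebraMap K F c) = c
  eval_x : ∀ P : W.Point, P ≠ 0 → eval P x = ptX P
  eval_y : ∀ P : W.Point, P ≠ 0 → eval P y = ptY P
  eval_add : ∀ (P : W.Point) (f g : F), (f = 0 ∨ 0 ≤ ord P f) → (g = 0 ∨ 0 ≤ ord P g) →
    eval P (f + g) = eval P f + eval P g
  eval_mul : ∀ (P : W.Point) (f g : F), (f = 0 ∨ 0 ≤ ord P f) → (g = 0 ∨ 0 ≤ ord P g) →
    eval P (f * g) = eval P f * eval P g
  eval_τ : ∀ (A P : W.Point) (f : F), eval P (τ A f) = eval (P + A) f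
  eval_ι : ∀ (P : W.Point) (f : F), eval P (ι f) = eval (-P) f
  eval_eq_zero_iff : ∀ (P : W.Point) (f : F), f ≠ 0 → 0 ≤ ord P f →
    (eval P f = 0 ↔ 0 < ord P f)

attribute [instance] FunModel.fieldF FunModel.algebraF

/-- `Γ(A,B,C)`: the slope of the secant (or tangent) line to `W` through the points
`C - A` and `A - B`. -/
noncomputable def Γsec {K : Type*} [Field K] {W : WeierstrassCurve.Affine K}
    (A B C : W.Point) : K :=
  W.slope (ptX (C - A)) (ptX (A - B)) (ptY (C - A)) (ptY (A - B))

namespace FunModel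

variable {W : Affine K} (S : FunModel W)

/-- The translate `f_A = f ∘ τ_{-A}` of a function `f` by a point `A`. -/
def trN (A : W.Point) (f : S.F) : S.F := S.τ (-A) f

/-- The function `u_{A,B} = (y_A - y(A-B)) / (x_A - x(A-B))` attached to two distinct
points `A`, `B` of `W`. -/
def u (A B : W.Point) : S.F :=
  (S.trN A S.y - algebraMap K S.F (ptY (A - B))) /
    (S.trN A S.x - algebraMap K S.F (ptX (A - B)))

/-- The Riemann–Roch space (as a subset of the function field) of the divisor `D`,
a divisor being given as a finitely supported function `W.Point → ℤ`; membership of a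
nonzero `f` means `ord_P(f) + D(P) ≥ 0` for every point `P`. -/
def RRset (D : W.Point → ℤ) : Set S.F :=
  {f | f = 0 ∨ ∀ P : W.Point, -(D P) ≤ S.ord P f}

end FunModel

/-- The divisor `⟨t⟩ = ∑_{l ∈ ℤ/dℤ} [l • t]` attached to the cyclic subgroup generated
by a point `t` of a Weierstrass curve `W`, as a function `W.Point → ℤ`. -/
def cycDiv {K : Type*} [Field K] {W : WeierstrassCurve.Affine K} (t : W.Point) :
    W.Point → ℤ :=
  fun P => if P ∈ AddSubgroup.zmultiples t then 1 else 0

private lemma exists_some {W : Affine K} {P : W.Point} (h : P ≠ 0) :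
    ∃ x y, ∃ hns : W.Nonsingular x y, P = .some _ _ hns := by
  cases P with
  | zero => exact absurd rfl h
  | some _ _ hns => exact ⟨_, _, hns, rfl⟩

private lemma FunModel.x_ne_const {W : Affine K} (S : FunModel W) (c : K) :
    S.x ≠ algebraMap K S.F c := by
  intro h
  rcases eq_or_ne c 0 with rfl | hc
  · rw [map_zero] at h
    rcases eq_or_ne S.y 0 with hy | hy
    · have h2 := S.ord_x_zero
      have h3 := S.ord_y_zero
      rw [h] at h2
      rw [hy] at h3
      omega
    · have heq2 : S.y * S.y = algebraMap K S.F W.a₆ + algebraMap K S.F (-W.a₃) * S.y := by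
        rw [map_neg]
        linear_combination S.equation + (S.x ^ 2 + algebraMap K S.F W.a₂ * S.x
          + algebraMap K S.F W.a₄ - algebraMap K S.F W.a₁ * S.y) * h
      have hyy : S.y * S.y ≠ 0 := mul_ne_zero hy hy
      have hordyy : S.ord 0 (S.y * S.y) = -6 := by
        rw [S.ord_mul 0 S.y S.y hy hy, S.ord_y_zero]; norm_num
      rcases eq_or_ne W.a₆ 0 with ha6 | ha6
      · rcases eq_or_ne W.a₃ 0 with ha3 | ha3
        · simp only [ha6, ha3, neg_zero, map_zero, zero_mul, add_zero, zero_add] at heq2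
          exact hyy heq2
        · rw [ha6, map_zero, zero_add] at heq2
          have hy2 : S.y = algebraMap K S.F (-W.a₃) := mul_right_cancel₀ hy heq2
          have h3 := S.ord_y_zero
          rw [hy2, S.ord_algebraMap 0 (-W.a₃) (neg_ne_zero.mpr ha3)] at h3
          omega
      · rcases eq_or_ne W.a₃ 0 with ha3 | ha3
        · rw [ha3, neg_zero, map_zero, zero_mul, add_zero] at heq2
          have h3 := hordyy
          rw [heq2, S.ord_algebraMap 0 W.a₆ ha6] at h3
          omega
        · have hf : algebraMap K S.F W.a₆ ≠ 0 := by
            simpa using ha6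
          have hg : algebraMap K S.F (-W.a₃) * S.y ≠ 0 := by
            refine mul_ne_zero (by simpa using ha3) hy
          have hfg : algebraMap K S.F W.a₆ + algebraMap K S.F (-W.a₃) * S.y ≠ 0 := by
            rw [← heq2]; exact hyy
          have hmin := S.ord_min_le_add 0 _ _ hf hg hfg
          rw [← heq2, hordyy, S.ord_algebraMap 0 W.a₆ ha6,
            S.ord_mul 0 _ _ (by simpa using ha3) hy,
            S.ord_algebraMap 0 (-W.a₃) (neg_ne_zero.mpr ha3), S.ord_y_zero] at hmin
          omega
  · have h2 := S.ord_x_zero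
    rw [h, S.ord_algebraMap 0 c hc] at h2
    omega

private lemma FunModel.tau_x_sub_ne {W : Affine K} (S : FunModel W) (A : W.Point) (c : K) :
    S.τ (-A) S.x - algebraMap K S.F c ≠ 0 := by
  intro h
  apply S.x_ne_const c
  have h2 : S.τ (-A) (S.x - algebraMap K S.F c) = 0 := by
    rw [map_sub, AlgEquiv.commutes]; exact h
  have h3 := (S.τ (-A)).injective (h2.trans (map_zero (S.τ (-A))).symm)
  exact sub_eq_zero.mp h3

/-- Let `E` be an elliptic curve over a field `K` with Weierstrass equation
`y² + a₁xy + a₃y = x³ + a₂x² + a₄x + a₆`, and let `A, B, C` be pairwise distinct points on `E`.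
Then `u_{A,B}·u_{A,C} = x_A + Γ(A,B,C)·u_{A,C} + Γ(A,C,B)·u_{A,B} + a₂ + x_A(B) + x_A(C)`
as an identity of functions on `E`, where `x_A(B) = x(B - A)` and `x_A(C) = x(C - A)`. -/
theorem u_mul_u {K : Type*} [Field K] {W : WeierstrassCurve.Affine K} [W.IsElliptic]
    (S : FunModel W) (A B C : W.Point) (hAB : A ≠ B) (hBC : B ≠ C) (hAC : A ≠ C) :
    S.u A B * S.u A C
      = S.trN A S.x + algebraMap K S.F (Γsec A B C) * S.u A C
          + algebraMap K S.F (Γsec A C B) * S.u A B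
          + algebraMap K S.F W.a₂ + algebraMap K S.F (ptX (B - A))
          + algebraMap K S.F (ptX (C - A)) := by
  obtain ⟨xb, yb, hb, hPb⟩ := exists_some (show A - B ≠ 0 from sub_ne_zero_of_ne hAB)
  obtain ⟨xc, yc, hc, hQc⟩ := exists_some (show A - C ≠ 0 from sub_ne_zero_of_ne hAC)
  set φ := algebraMap K S.F with hφ
  set X := S.τ (-A) S.x with hX
  set Y := S.τ (-A) S.y with hY
  have hinj : Function.Injective φ := (algebraMap K S.F).injective
  have hxb : ptX (A - B) = xb := by rw [hPb]; rfl
  have hyb : ptY (A - B) = yb := by rw [hPb]; rfl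
  have hxc : ptX (A - C) = xc := by rw [hQc]; rfl
  have hyc : ptY (A - C) = yc := by rw [hQc]; rfl
  have hxb' : ptX (B - A) = xb := by rw [← neg_sub A B, hPb, Affine.Point.neg_some]; rfl
  have hyb' : ptY (B - A) = W.negY xb yb := by
    rw [← neg_sub A B, hPb, Affine.Point.neg_some]; rfl
  have hxc' : ptX (C - A) = xc := by rw [← neg_sub A C, hQc, Affine.Point.neg_some]; rfl
  have hyc' : ptY (C - A) = W.negY xc yc := by
    rw [← neg_sub A C, hQc, Affine.Point.neg_some]; rfl
  have hΓ1 : Γsec A B C = W.slope xc xb (W.negY xc yc) yb := by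
    rw [Γsec, hxc', hxb, hyc', hyb]
  have hΓ2 : Γsec A C B = W.slope xb xc (W.negY xb yb) yc := by
    rw [Γsec, hxb', hxc, hyb', hyc]
  have heb : yb ^ 2 + W.a₁ * xb * yb + W.a₃ * yb
      = xb ^ 3 + W.a₂ * xb ^ 2 + W.a₄ * xb + W.a₆ := (W.equation_iff xb yb).mp hb.left
  have hec : yc ^ 2 + W.a₁ * xc * yc + W.a₃ * yc
      = xc ^ 3 + W.a₂ * xc ^ 2 + W.a₄ * xc + W.a₆ := (W.equation_iff xc yc).mp hc.left
  have hE : Y ^ 2 + φ W.a₁ * X * Y + φ W.a₃ * Y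
      = X ^ 3 + φ W.a₂ * X ^ 2 + φ W.a₄ * X + φ W.a₆ := by
    have h0 := congrArg (S.τ (-A)) S.equation
    simpa only [map_add, map_mul, map_pow, AlgEquiv.commutes] using h0
  have hEb : φ yb ^ 2 + φ W.a₁ * φ xb * φ yb + φ W.a₃ * φ yb
      = φ xb ^ 3 + φ W.a₂ * φ xb ^ 2 + φ W.a₄ * φ xb + φ W.a₆ := by
    simpa only [map_add, map_mul, map_pow] using congrArg φ heb
  have hEc : φ yc ^ 2 + φ W.a₁ * φ xc * φ yc + φ W.a₃ * φ yc
      = φ xc ^ 3 + φ W.a₂ * φ xc ^ 2 + φ W.a₄ * φ xc + φ W.a₆ := by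
    simpa only [map_add, map_mul, map_pow] using congrArg φ hec
  have hDb : X - φ xb ≠ 0 := S.tau_x_sub_ne A xb
  have hDc : X - φ xc ≠ 0 := S.tau_x_sub_ne A xc
  have hu1 : S.u A B = (Y - φ yb) / (X - φ xb) := by
    rw [FunModel.u, hxb, hyb]; rfl
  have hu2 : S.u A C = (Y - φ yc) / (X - φ xc) := by
    rw [FunModel.u, hxc, hyc]; rfl
  have key : (Y - φ yb) * (Y - φ yc)
      = (X + φ W.a₂ + φ xb + φ xc) * ((X - φ xb) * (X - φ xc))
        + φ (Γsec A B C) * ((Y - φ yc) * (X - φ xb))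
        + φ (Γsec A C B) * ((Y - φ yb) * (X - φ xc)) := by
    by_cases hxx : xb = xc
    · subst hxx
      have hne : yc ≠ yb := by
        intro hyy
        subst hyy
        exact hBC (sub_right_injective (hPb.trans hQc.symm))
      have hycb : yc = W.negY xb yb :=
        (Affine.Y_eq_of_X_eq hc.left hb.left rfl).resolve_left hne
      have hycb' : yc = -yb - W.a₁ * xb - W.a₃ := by rw [hycb, Affine.negY]
      have hw : yb ≠ W.negY xb yb := fun h => hne (hycb.trans h.symm)
      have hwK : (2 * yb + W.a₁ * xb + W.a₃ : K) ≠ 0 := by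
        intro h0
        apply hw
        rw [Affine.negY]
        linear_combination h0
      have e1 : Γsec A B C * (2 * yb + W.a₁ * xb + W.a₃)
          = 3 * xb ^ 2 + 2 * W.a₂ * xb + W.a₄ - W.a₁ * yb := by
        rw [hΓ1, hycb, Affine.negY_negY, Affine.slope_of_Y_ne rfl hw, Affine.negY,
          div_mul_eq_mul_div, div_eq_iff (by intro h0; exact hwK (by linear_combination h0))]
        ring
      have hnyc : W.negY xb yc = yb := by rw [hycb, Affine.negY_negY]
      have hyc_ne : yc ≠ W.negY xb yc := by rw [hnyc]; exact hne
      have e2 : Γsec A C B * (-(2 * yb + W.a₁ * xb + W.a₃))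
          = 3 * xb ^ 2 + 2 * W.a₂ * xb + W.a₄ - W.a₁ * yc := by
        rw [hΓ2, ← hycb, Affine.slope_of_Y_ne rfl hyc_ne, hnyc, div_mul_eq_mul_div,
          div_eq_iff (sub_ne_zero_of_ne hne)]
        linear_combination -(3 * xb ^ 2 + 2 * W.a₂ * xb + W.a₄ - W.a₁ * yc) * hycb'
      have hg1 := congrArg φ e1
      have hg2 := congrArg φ e2
      have hg0 := congrArg φ hycb'
      simp only [map_add, map_mul, map_sub, map_neg, map_pow, map_ofNat] at hg1 hg2 hg0
      have hd2 : (2 : S.F) * φ yb + φ W.a₁ * φ xb + φ W.a₃ ≠ 0 := by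
        have h2 := hwK
        have h3 : φ (2 * yb + W.a₁ * xb + W.a₃) ≠ 0 :=
          fun h => h2 (hinj (h.trans (map_zero φ).symm))
        simpa only [map_add, map_mul, map_ofNat] using h3
      apply mul_right_cancel₀ hd2
      linear_combination ((2 : S.F) * φ yb + φ W.a₁ * φ xb + φ W.a₃) * hE
        - ((2 : S.F) * φ yb + φ W.a₁ * φ xb + φ W.a₃) * hEb
        - (Y - φ yc) * (X - φ xb) * hg1 + (Y - φ yb) * (X - φ xb) * hg2
        + (-((2 : S.F) * φ yb + φ W.a₃ + φ W.a₁ * X) * (Y - φ yb)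
            + (3 * φ xb ^ 2 + 2 * φ W.a₂ * φ xb + φ W.a₄ - φ W.a₁ * φ yb) * (X - φ xb)) * hg0
    · have hd : φ xc - φ xb ≠ 0 := by
        rw [← map_sub]
        exact fun h => sub_ne_zero_of_ne (Ne.symm hxx) (hinj (h.trans (map_zero φ).symm))
      have e1 : Γsec A B C * (xc - xb) = -yc - W.a₁ * xc - W.a₃ - yb := by
        rw [hΓ1, Affine.slope_of_X_ne (Ne.symm hxx), Affine.negY,
          div_mul_cancel₀ _ (sub_ne_zero_of_ne (Ne.symm hxx))]
      have e2 : Γsec A C B * (xb - xc) = -yb - W.a₁ * xb - W.a₃ - yc := by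
        rw [hΓ2, Affine.slope_of_X_ne hxx, Affine.negY,
          div_mul_cancel₀ _ (sub_ne_zero_of_ne hxx)]
      have hg1 := congrArg φ e1
      have hg2 := congrArg φ e2
      simp only [map_mul, map_sub, map_neg] at hg1 hg2
      apply mul_right_cancel₀ hd
      linear_combination (φ xc - φ xb) * hE + (X - φ xc) * hEb - (X - φ xb) * hEc
        - (Y - φ yc) * (X - φ xb) * hg1 + (Y - φ yb) * (X - φ xc) * hg2
  rw [hu1, hu2, hxb', hxc', div_mul_div_comm, key]
  show _ = X + φ (Γsec A B C) * ((Y - φ yc) / (X - φ xc))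
      + φ (Γsec A C B) * ((Y - φ yb) / (X - φ xb)) + φ W.a₂ + φ xb + φ xc
  field_simp
  ring
end
end

section
/- Let K be a field of odd characteristic and let E be the elliptic curve over K with Weierstrass equation y² + a₁xy + a₃y = x³ + a₂x² + a₄x + a₆ and origin O. Let δ ≥ 1, d = 2^δ, let t ∈ E(K) be a point of order d, and let T = (d/2)t. Define the functions x' = x + x_T − x(T), y' = y + y_T − y(T), z = −x/y and z' = −x'/y' on E. Then, in the local ring at O, z' − z vanishes to order at least 4 (z' = z + O(z⁴)) and 1/z' − 1/z vanishes to order at least 2 (1/z' = 1/z + O(z²)). -/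
noncomputable section

open WeierstrassCurve

open scoped Classical

variable {K : Type*} [Field K]

/-!
Write `x' = x + α` and `y' = y + β` with `α = x_T - x(T)` and `β = y_T - y(T)`. Since
`x(-T) = x(T)`, the function `α` vanishes at `O`, and `β` is regular there; so `x'`, `y'` have
the same pole orders `2`, `3` at `O` as `x`, `y`. Both differences have the numerator
`N = xβ - yα`, which has a pole of order at most `2`:
`z' - z = N / (y y')` and `1/z' - 1/z = -N / (x x')`.
-/

lemma ptX_neg {W : Affine K} (P : W.Point) : ptX (-P) = ptX P := by
  cases P <;> rfl

namespace FunModel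

variable {W : Affine K} (S : FunModel W)

/-- `n ≤ ord_P f`, with the convention `ord_P 0 = ∞`. -/
def OrdAtLeast (P : W.Point) (n : ℤ) (f : S.F) : Prop :=
  f = 0 ∨ n ≤ S.ord P f

lemma ord_neg (P : W.Point) (f : S.F) : S.ord P (-f) = S.ord P f := by
  rcases eq_or_ne f 0 with rfl | hf
  · rw [neg_zero]
  have hneg : -f = algebraMap K S.F (-1) * f := by simp
  rw [hneg, S.ord_mul P _ f (by simp) hf, S.ord_algebraMap P (-1) (by simp), zero_add]

lemma ord_inv (P : W.Point) {f : S.F} (hf : f ≠ 0) : S.ord P f⁻¹ = -S.ord P f := by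
  have hone := S.ord_algebraMap P 1 one_ne_zero
  rw [map_one, ← mul_inv_cancel₀ hf, S.ord_mul P f f⁻¹ hf (inv_ne_zero hf)] at hone
  omega

lemma ord_algebraMap_eq (c : K) (P Q : W.Point) :
    S.ord P (algebraMap K S.F c) = S.ord Q (algebraMap K S.F c) := by
  simpa only [AlgEquiv.commutes, add_sub_cancel] using S.ord_τ (Q - P) P (algebraMap K S.F c)

lemma ne_algebraMap_of_ord_ne {f : S.F} {P Q : W.Point} (h : S.ord P f ≠ S.ord Q f) (c : K) :
    f ≠ algebraMap K S.F c := by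
  rintro rfl
  exact h (S.ord_algebraMap_eq c P Q)

lemma x_ne_zero {P : W.Point} (hP : P ≠ 0) : S.x ≠ 0 := by
  have hne : S.ord 0 S.x ≠ S.ord P S.x := by
    have := S.ord_x_nonneg P hP
    rw [S.ord_x_zero]
    omega
  simpa using S.ne_algebraMap_of_ord_ne hne 0

lemma y_ne_zero {P : W.Point} (hP : P ≠ 0) : S.y ≠ 0 := by
  have hne : S.ord 0 S.y ≠ S.ord P S.y := by
    have := S.ord_y_nonneg P hP
    rw [S.ord_y_zero]
    omega
  simpa using S.ne_algebraMap_of_ord_ne hne 0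

namespace OrdAtLeast

variable {S} {P : W.Point} {m n : ℤ} {f g : S.F}

lemma of_ord_eq (h : S.ord P f = n) : S.OrdAtLeast P n f :=
  Or.inr h.ge

lemma neg (hf : S.OrdAtLeast P n f) : S.OrdAtLeast P n (-f) := by
  simpa only [OrdAtLeast, neg_eq_zero, S.ord_neg] using hf

lemma add (hf : S.OrdAtLeast P n f) (hg : S.OrdAtLeast P n g) : S.OrdAtLeast P n (f + g) := by
  rcases eq_or_ne f 0 with rfl | hf0
  · rwa [zero_add]
  rcases eq_or_ne g 0 with rfl | hg0
  · rwa [add_zero]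
  rcases eq_or_ne (f + g) 0 with hfg | hfg
  · exact Or.inl hfg
  exact Or.inr ((le_min (hf.resolve_left hf0) (hg.resolve_left hg0)).trans
    (S.ord_min_le_add P f g hf0 hg0 hfg))

lemma sub (hf : S.OrdAtLeast P n f) (hg : S.OrdAtLeast P n g) : S.OrdAtLeast P n (f - g) := by
  simpa only [sub_eq_add_neg] using hf.add hg.neg

lemma mul (hf : S.OrdAtLeast P m f) (hg : S.OrdAtLeast P n g) :
    S.OrdAtLeast P (m + n) (f * g) := by
  rcases eq_or_ne f 0 with rfl | hf0
  · exact Or.inl (zero_mul g)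
  rcases eq_or_ne g 0 with rfl | hg0
  · exact Or.inl (mul_zero f)
  rw [OrdAtLeast, S.ord_mul P f g hf0 hg0]
  exact Or.inr (add_le_add (hf.resolve_left hf0) (hg.resolve_left hg0))

end OrdAtLeast

lemma ordAtLeast_algebraMap (P : W.Point) (c : K) : S.OrdAtLeast P 0 (algebraMap K S.F c) := by
  rcases eq_or_ne c 0 with rfl | hc
  · exact Or.inl (map_zero _)
  · exact OrdAtLeast.of_ord_eq (S.ord_algebraMap P c hc)

section StrictTriangle

variable {P : W.Point} {n : ℤ} {f g : S.F}

lemma add_ne_zero_of_ord_lt (hf : f ≠ 0) (hg : S.OrdAtLeast P n g) (h : S.ord P f < n) :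
    f + g ≠ 0 := by
  intro hfg
  have hgf : g = -f := by linear_combination hfg
  rcases hg with hg | hg
  · exact hf (by linear_combination hfg - hg)
  · rw [hgf, S.ord_neg] at hg
    omega

lemma ord_add_eq_of_ord_lt (hf : f ≠ 0) (hg : S.OrdAtLeast P n g) (h : S.ord P f < n) :
    S.ord P (f + g) = S.ord P f := by
  rcases eq_or_ne g 0 with rfl | hg0
  · rw [add_zero]
  have hfg := S.add_ne_zero_of_ord_lt hf hg h
  have hle := S.ord_min_le_add P f g hf hg0 hfg
  have hge := S.ord_min_le_add P (f + g) (-g) hfg (neg_ne_zero.2 hg0) (by simpa using hf)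
  rw [add_neg_cancel_right, S.ord_neg] at hge
  have hg' := hg.resolve_left hg0
  omega

end StrictTriangle

lemma ordAtLeast_trN_iff {P A : W.Point} {n : ℤ} {f : S.F} :
    S.OrdAtLeast P n (S.trN A f) ↔ S.OrdAtLeast (P - A) n f := by
  simp only [OrdAtLeast, trN, EmbeddingLike.map_eq_zero_iff, S.ord_τ, sub_eq_add_neg]

lemma trN_sub_algebraMap (A : W.Point) (f : S.F) (c : K) :
    S.trN A f - algebraMap K S.F c = S.trN A (f - algebraMap K S.F c) := by
  rw [trN, trN, map_sub, AlgEquiv.commutes]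

lemma ordAtLeast_trN_x_sub_ptX {A : W.Point} (hA : A ≠ 0) :
    S.OrdAtLeast 0 1 (S.trN A S.x - algebraMap K S.F (ptX A)) := by
  rw [trN_sub_algebraMap, ordAtLeast_trN_iff, zero_sub, ← ptX_neg]
  exact Or.inr (S.ord_x_sub_pos (-A) (neg_ne_zero.2 hA))

lemma ordAtLeast_trN_y_sub {A : W.Point} (hA : A ≠ 0) (c : K) :
    S.OrdAtLeast 0 0 (S.trN A S.y - algebraMap K S.F c) := by
  rw [trN_sub_algebraMap, ordAtLeast_trN_iff, zero_sub]
  exact OrdAtLeast.sub (Or.inr (S.ord_y_nonneg _ (neg_ne_zero.2 hA)))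
    (S.ordAtLeast_algebraMap _ c)

section PerturbedCoordinates

variable {α β : S.F}

lemma ordAtLeast_x_mul_sub_y_mul (hα : S.OrdAtLeast 0 1 α) (hβ : S.OrdAtLeast 0 0 β) :
    S.OrdAtLeast 0 (-2) (S.x * β - S.y * α) := by
  have hxβ : S.OrdAtLeast 0 (-2) (S.x * β) := by
    simpa using (OrdAtLeast.of_ord_eq S.ord_x_zero).mul hβ
  have hyα : S.OrdAtLeast 0 (-2) (S.y * α) := by
    simpa using (OrdAtLeast.of_ord_eq S.ord_y_zero).mul hα
  exact hxβ.sub hyα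

lemma ordAtLeast_neg_div_sub (hy : S.y ≠ 0) (hα : S.OrdAtLeast 0 1 α)
    (hβ : S.OrdAtLeast 0 0 β) :
    S.OrdAtLeast 0 4 (-(S.x + α) / (S.y + β) - -S.x / S.y) := by
  have hord_y : S.ord 0 S.y < 0 := by rw [S.ord_y_zero]; norm_num
  have hy' : S.y + β ≠ 0 := S.add_ne_zero_of_ord_lt hy hβ hord_y
  have hinv : S.ord 0 (S.y * (S.y + β))⁻¹ = 6 := by
    rw [S.ord_inv 0 (mul_ne_zero hy hy'), S.ord_mul 0 _ _ hy hy',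
      S.ord_add_eq_of_ord_lt hy hβ hord_y, S.ord_y_zero]
    norm_num
  have key : -(S.x + α) / (S.y + β) - -S.x / S.y =
      (S.x * β - S.y * α) * (S.y * (S.y + β))⁻¹ := by
    field_simp
    ring
  rw [key]
  simpa using (S.ordAtLeast_x_mul_sub_y_mul hα hβ).mul (OrdAtLeast.of_ord_eq hinv)

lemma ordAtLeast_inv_neg_div_sub (hx : S.x ≠ 0) (hα : S.OrdAtLeast 0 1 α)
    (hβ : S.OrdAtLeast 0 0 β) :
    S.OrdAtLeast 0 2 ((-(S.x + α) / (S.y + β))⁻¹ - (-S.x / S.y)⁻¹) := by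
  have hord_x : S.ord 0 S.x < 1 := by rw [S.ord_x_zero]; norm_num
  have hx' : S.x + α ≠ 0 := S.add_ne_zero_of_ord_lt hx hα hord_x
  have hinv : S.ord 0 (S.x * (S.x + α))⁻¹ = 4 := by
    rw [S.ord_inv 0 (mul_ne_zero hx hx'), S.ord_mul 0 _ _ hx hx',
      S.ord_add_eq_of_ord_lt hx hα hord_x, S.ord_x_zero]
    norm_num
  have key : (-(S.x + α) / (S.y + β))⁻¹ - (-S.x / S.y)⁻¹ =
      -(S.x * β - S.y * α) * (S.x * (S.x + α))⁻¹ := by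
    rw [inv_div, inv_div]
    field_simp
    ring
  rw [key]
  simpa using (S.ordAtLeast_x_mul_sub_y_mul hα hβ).neg.mul (OrdAtLeast.of_ord_eq hinv)

end PerturbedCoordinates

end FunModel

theorem velu_local_parameter_general {K : Type*} [Field K]
    {W : WeierstrassCurve.Affine K} (S : FunModel W)
    (δ : ℕ) (hδ : 1 ≤ δ) (d : ℕ) (hd : d = 2 ^ δ)
    (t : W.Point) (ht : addOrderOf t = d)
    (T : W.Point) (hT : T = 2 ^ (δ - 1) • t)
    (x' y' z z' : S.F)
    (hx' : x' = S.x + S.trN T S.x - algebraMap K S.F (ptX T))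
    (hy' : y' = S.y + S.trN T S.y - algebraMap K S.F (ptY T))
    (hz : z = -S.x / S.y) (hz' : z' = -x' / y') :
    (z' - z = 0 ∨ 4 ≤ S.ord 0 (z' - z)) ∧
      (z'⁻¹ - z⁻¹ = 0 ∨ 2 ≤ S.ord 0 (z'⁻¹ - z⁻¹)) := by
  have hT0 : T ≠ 0 := by
    rw [hT]
    refine nsmul_ne_zero_of_lt_addOrderOf (by positivity) ?_
    rw [ht, hd]
    exact Nat.pow_lt_pow_right (by norm_num) (by omega)
  have hα := S.ordAtLeast_trN_x_sub_ptX hT0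
  have hβ := S.ordAtLeast_trN_y_sub hT0 (ptY T)
  rw [add_sub_assoc] at hx' hy'
  subst hx' hy' hz hz'
  exact ⟨S.ordAtLeast_neg_div_sub (S.y_ne_zero hT0) hα hβ,
    S.ordAtLeast_inv_neg_div_sub (S.x_ne_zero hT0) hα hβ⟩

/-- Let `E` be an elliptic curve over a field `K` of odd characteristic, `d = 2^δ` with
`δ ≥ 1`, `t` a point of order `d` on `E`, and `T = (d/2)t`. With `x' = x + x_T - x(T)`,
`y' = y + y_T - y(T)`, `z = -x/y` and `z' = -x'/y'`, the function `z' - z` vanishes to order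
at least `4` at `O` (i.e. `z' = z + O(z⁴)`), and `1/z' - 1/z` vanishes to order at least `2`
at `O` (i.e. `1/z' = 1/z + O(z²)`). -/
theorem velu_local_parameter {K : Type*} [Field K] (hchar : ringChar K ≠ 2)
    {W : WeierstrassCurve.Affine K} [W.IsElliptic] (S : FunModel W)
    (δ : ℕ) (hδ : 1 ≤ δ) (d : ℕ) (hd : d = 2 ^ δ)
    (t : W.Point) (ht : addOrderOf t = d)
    (T : W.Point) (hT : T = 2 ^ (δ - 1) • t)
    (x' y' z z' : S.F)
    (hx' : x' = S.x + S.trN T S.x - algebraMap K S.F (ptX T))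
    (hy' : y' = S.y + S.trN T S.y - algebraMap K S.F (ptY T))
    (hz : z = -S.x / S.y) (hz' : z' = -x' / y') :
    (z' - z = 0 ∨ 4 ≤ S.ord 0 (z' - z)) ∧
      (z'⁻¹ - z⁻¹ = 0 ∨ 2 ≤ S.ord 0 (z'⁻¹ - z⁻¹)) :=
  velu_local_parameter_general S δ hδ d hd t ht T hT x' y' z z' hx' hy' hz hz'
end
end
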